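/- arXiv:2302.06158 — 5 statements merged into one kernel-verified Lean document; each statement's English description precedes it below -/
import Mathlib

section
/- Let X = {a,b} and define morphisms g_1, g_2 : X* → X* by g_1(a) = a, g_1(b) = b², g_2(a) = a², g_2(b) = b. Then g_1 and g_2 commute, but there do not exist positive integers m, n and a morphism g : X* → X* such that g_1 = g^m and g_2 = g^n. -/
/-- Words over the binary alphabet: `false` is the letter `a`, `true` is the letter `b`. -/
abbrev Word := List Bool

/-- The morphism of the free monoid determined by the images `g` of the letters. -/
def applyG (g : Bool → Word) (w : Word) : Word := w.flatMap g

/-- `a^n`. -/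
def rep (n : ℕ) : Word := List.replicate n false

/-- `b a^{α 1} b a^{α 2} ⋯ b a^{α (p-1)} b`, a word with `p` occurrences of `b`. -/
def blockWord (p : ℕ) (α : ℕ → ℕ) : Word :=
  ((List.range (p - 1)).flatMap fun i => true :: rep (α (i + 1))) ++ [true]

/-- `w^k`. -/
def wordPow (w : Word) (k : ℕ) : Word := (List.replicate k w).flatten

/-- `u` and `v` are `a`-conjugates. -/
def AConj (u v : Word) : Prop :=
  ∃ p q r s : ℕ, ∃ w : Word,
    u = rep p ++ w ++ rep q ∧ v = rep r ++ w ++ rep s ∧ p + q = r + s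

/-- `w` is the infinite word `ω(g)`: for every `n`, the word obtained from `g^n(b)` by deleting
all occurrences of `a` preceding the first occurrence of `b` is a prefix of `w`. -/
def IsOmega (g : Bool → Word) (w : ℕ → Bool) : Prop :=
  ∀ n k : ℕ, ∀ hk : k < (((applyG g)^[n] [true]).dropWhile (fun x => !x)).length,
    (((applyG g)^[n] [true]).dropWhile (fun x => !x)).get ⟨k, hk⟩ = w k

/-- `Aw w i` (for `i ≥ 1`): the number of occurrences of `a` in `w` strictly between the
`i`-th and `(i+1)`-th occurrences of `b` in `w`. -/
noncomputable def Aw (w : ℕ → Bool) (i : ℕ) : ℕ :=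
  Nat.nth (fun n => w n = true) i - Nat.nth (fun n => w n = true) (i - 1) - 1

/-- `g₁(a)=a, g₁(b)=b², g₂(a)=a², g₂(b)=b` commute, but are not both powers
of a common morphism. -/
theorem stmt1 (g₁ g₂ : Bool → Word)
    (h₁a : g₁ false = [false]) (h₁b : g₁ true = [true, true])
    (h₂a : g₂ false = [false, false]) (h₂b : g₂ true = [true]) :
    (applyG g₁ ∘ applyG g₂ = applyG g₂ ∘ applyG g₁) ∧
      ¬ ∃ (m n : ℕ) (g : Bool → Word), 0 < m ∧ 0 < n ∧
        (applyG g)^[m] = applyG g₁ ∧ (applyG g)^[n] = applyG g₂ := by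
  constructor
  · funext w
    induction w with
    | nil => rfl
    | cons x t ih =>
      cases x <;>
        simp_all [applyG, List.flatMap_cons, h₁a, h₁b, h₂a, h₂b]
  · rintro ⟨m, n, g, hm, hn, hg₁, hg₂⟩
    have key : ∀ k, applyG g₂ (List.replicate k false) = List.replicate (2 * k) false := by
      intro k
      induction k with
      | zero => rfl
      | succ k ih =>
        simp [applyG, List.replicate_succ, List.flatMap_cons, h₂a] at *
        simp [ih, Nat.mul_succ, List.replicate_succ, List.replicate_add]
    have pow2 : ∀ k, (applyG g₂)^[k] [false] = List.replicate (2 ^ k) false := by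
      intro k
      induction k with
      | zero => rfl
      | succ k ih => rw [Function.iterate_succ_apply', ih, key, pow_succ, mul_comm]
    have fix1 : ∀ k, (applyG g₁)^[k] [false] = [false] := by
      intro k
      induction k with
      | zero => rfl
      | succ k ih =>
        rw [Function.iterate_succ_apply', ih]
        simp [applyG, h₁a]
    have e : (applyG g)^[m * n] [false] = (applyG g)^[n * m] [false] := by
      rw [Nat.mul_comm]
    rw [Function.iterate_mul, Function.iterate_mul, hg₁, hg₂, fix1, pow2] at e
    have := congrArg List.length e
    simp at this
    have h2 : 2 ≤ 2 ^ m := Nat.one_lt_two_pow (by omega)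
    omega
end

section
/- Let X = {a,b} and let g_1, g_2 : X* → X* be morphisms with g_1(a) = g_2(a) = a. Suppose there exist positive integers m and n and nonnegative integers γ_1, γ_2, δ_1, δ_2 with γ_1 + γ_2 = δ_1 + δ_2, and a word z of the form z = b a^{α_1} b a^{α_2} b ⋯ b a^{α_{p-1}} b (with p ≥ 1 and nonnegative integers α_i), such that g_1^n(b) = a^{γ_1} z a^{γ_2} and g_2^m(b) = a^{δ_1} z a^{δ_2}. Then g_1^n and g_2^m commute. -/
lemma rep_append_rep (i j : ℕ) : rep i ++ rep j = rep (i + j) := by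
  simp [rep]

lemma applyG_append (g : Bool → Word) (u v : Word) :
    applyG g (u ++ v) = applyG g u ++ applyG g v := by
  simp [applyG]

lemma applyG_applyG (f g : Bool → Word) (w : Word) :
    applyG f (applyG g w) = applyG (fun x => applyG f (g x)) w :=
  List.flatMap_assoc

lemma applyG_singleton (g : Bool → Word) (x : Bool) : applyG g [x] = g x := by
  simp [applyG]

lemma applyG_rep (g : Bool → Word) (h : g false = [false]) (k : ℕ) :
    applyG g (rep k) = rep k := by
  induction k with
  | zero => rfl
  | succ k ih => rw [← rep_append_rep, applyG_append, ih, rep, rep, List.replicate_one,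
      applyG_singleton, h]

lemma iterate_applyG (g : Bool → Word) (n : ℕ) (w : Word) :
    (applyG g)^[n] w = applyG (fun x => (applyG g)^[n] [x]) w := by
  induction n generalizing w with
  | zero => exact (List.flatMap_singleton' w).symm
  | succ n ih =>
    rw [Function.iterate_succ_apply, ih, applyG_applyG]
    congr
    funext x
    rw [Function.iterate_succ_apply, applyG_singleton, ih]

lemma iterate_applyG_false (g : Bool → Word) (h : g false = [false]) (n : ℕ) :
    (applyG g)^[n] [false] = [false] := by
  induction n with
  | zero => rfl
  | succ n ih => rw [Function.iterate_succ_apply, applyG_singleton, h, ih]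

lemma applyG_comp_comm (f g : Bool → Word) (h : ∀ x, applyG f (g x) = applyG g (f x)) :
    applyG f ∘ applyG g = applyG g ∘ applyG f := by
  funext w
  simp only [Function.comp_apply, applyG_applyG, h]

def substB (c d : ℕ) (z : Word) : Bool → Word :=
  fun x => if x then rep c ++ z ++ rep d else [false]

lemma substB_false (c d : ℕ) (z : Word) : substB c d z false = [false] := rfl

lemma substB_true (c d : ℕ) (z : Word) : substB c d z true = rep c ++ z ++ rep d := rfl

lemma iterate_applyG_eq_substB (g : Bool → Word) (ha : g false = [false]) (n c d : ℕ) (z : Word)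
    (hb : (applyG g)^[n] [true] = rep c ++ z ++ rep d) :
    (applyG g)^[n] = applyG (substB c d z) := by
  funext w
  rw [iterate_applyG]
  congr
  funext x
  cases x
  · exact iterate_applyG_false g ha n
  · exact hb

lemma applyG_substB_append_rep (c d : ℕ) (z w : Word) :
    applyG (substB c d z) w ++ rep c = rep c ++ applyG (substB 0 (c + d) z) w := by
  induction w with
  | nil => simp [applyG]
  | cons x w ih =>
    rw [← List.singleton_append, applyG_append, applyG_append, List.append_assoc, ih]
    cases x <;> simp only [applyG_singleton, substB_false, substB_true, ← List.append_assoc]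
    · rw [show [false] = rep 1 from rfl, rep_append_rep, rep_append_rep, Nat.add_comm]
    · rw [show rep 0 = [] from rfl, List.append_nil, Nat.add_comm c d, ← rep_append_rep d c]
      simp only [List.append_assoc]

lemma applyG_substB_substB_true_append_rep (c₁ d₁ c₂ d₂ : ℕ) (z : Word) :
    applyG (substB c₁ d₁ z) (substB c₂ d₂ z true) ++ rep (c₁ + d₁) =
      rep (c₂ + c₁) ++ applyG (substB 0 (c₁ + d₁) z) z ++ rep (d₂ + d₁) := by
  rw [substB_true, applyG_append, applyG_append, applyG_rep _ rfl, applyG_rep _ rfl,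
    List.append_assoc _ (rep d₂), rep_append_rep,
    show d₂ + (c₁ + d₁) = c₁ + (d₂ + d₁) by omega,
    ← rep_append_rep c₁, List.append_assoc (rep c₂), ← List.append_assoc (applyG _ z),
    applyG_substB_append_rep, ← rep_append_rep c₂]
  simp only [List.append_assoc]

lemma applyG_substB_comm (z : Word) {c₁ d₁ c₂ d₂ : ℕ} (h : c₁ + d₁ = c₂ + d₂) :
    applyG (substB c₁ d₁ z) ∘ applyG (substB c₂ d₂ z) =
      applyG (substB c₂ d₂ z) ∘ applyG (substB c₁ d₁ z) := by
  refine applyG_comp_comm _ _ fun x => ?_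
  cases x
  · simp only [substB_false, applyG_singleton]
  · apply List.append_cancel_right (bs := rep (c₁ + d₁))
    rw [applyG_substB_substB_true_append_rep, h, applyG_substB_substB_true_append_rep,
      Nat.add_comm c₂ c₁, Nat.add_comm d₂ d₁]

theorem stmt3_general (g₁ g₂ : Bool → Word)
    (h₁a : g₁ false = [false]) (h₂a : g₂ false = [false])
    (m n : ℕ)
    (p : ℕ) (α : ℕ → ℕ) (γ₁ γ₂ δ₁ δ₂ : ℕ)
    (hsum : γ₁ + γ₂ = δ₁ + δ₂)
    (h₁b : (applyG g₁)^[n] [true] = rep γ₁ ++ blockWord p α ++ rep γ₂)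
    (h₂b : (applyG g₂)^[m] [true] = rep δ₁ ++ blockWord p α ++ rep δ₂) :
    (applyG g₁)^[n] ∘ (applyG g₂)^[m] = (applyG g₂)^[m] ∘ (applyG g₁)^[n] := by
  rw [iterate_applyG_eq_substB g₁ h₁a n γ₁ γ₂ _ h₁b,
    iterate_applyG_eq_substB g₂ h₂a m δ₁ δ₂ _ h₂b]
  exact applyG_substB_comm _ hsum

/-- if `g₁(a)=g₂(a)=a` and `g₁^n(b) = a^{γ₁} z a^{γ₂}`, `g₂^m(b) = a^{δ₁} z a^{δ₂}`
with `γ₁+γ₂ = δ₁+δ₂` and `z = b a^{α₁} b ⋯ b a^{α_{p-1}} b`, then `g₁^n` and `g₂^m` commute. -/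
theorem stmt3 (g₁ g₂ : Bool → Word)
    (h₁a : g₁ false = [false]) (h₂a : g₂ false = [false])
    (m n : ℕ) (hm : 0 < m) (hn : 0 < n)
    (p : ℕ) (hp : 1 ≤ p) (α : ℕ → ℕ) (γ₁ γ₂ δ₁ δ₂ : ℕ)
    (hsum : γ₁ + γ₂ = δ₁ + δ₂)
    (h₁b : (applyG g₁)^[n] [true] = rep γ₁ ++ blockWord p α ++ rep γ₂)
    (h₂b : (applyG g₂)^[m] [true] = rep δ₁ ++ blockWord p α ++ rep δ₂) :
    (applyG g₁)^[n] ∘ (applyG g₂)^[m] = (applyG g₂)^[m] ∘ (applyG g₁)^[n] :=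
  stmt3_general g₁ g₂ h₁a h₂a m n p α γ₁ γ₂ δ₁ δ₂ hsum h₁b h₂b
end

section
/- Let X = {a,b}, and let h : X* → X* be the morphism with h(a) = a^s and h(b) = a^{γ_1} b a^{α_1} b ⋯ b a^{α_{p-1}} b a^{γ_2}, where s ≥ 1, p ≥ 2 and all exponents are nonnegative. Let w = ω(h). Then for every i ≥ 1, A_w(p·i) = s·A_w(i) + γ_1 + γ_2. -/
/-! Write an infinite word starting with `b` as `b a^{g 1} b a^{g 2} b ⋯`, so that `A_w = g`.
Each `b` of `b a^{g 1} b ⋯ a^{g m} b` is sent by `h` to a block with `p` letters `b`, and the `a`s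
between consecutive blocks are `γ₂`, then `s` times the old gap, then `γ₁`. So, after deleting the
leading `a^{γ₁}`, the image has the gap sequence `g' = gapImage … g`, with
`g' (p k) = s g k + γ₁ + γ₂` and `g' j = α (j mod p)` for `p ∤ j`. The recursively defined
`gapSeq` is a fixed point of `g ↦ g'`, so every `h^n(b)` is `b a^{gapSeq 1} b ⋯` up to `a`s at
both ends, and `ω(h)` has gap sequence `gapSeq`. -/

namespace GapWord

lemma rep_add (m n : ℕ) : rep (m + n) = rep m ++ rep n := List.replicate_add ..

lemma dropWhile_rep_append_cons_true (c : ℕ) (l : Word) :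
    (rep c ++ true :: l).dropWhile (fun x => !x) = true :: l := by
  induction c <;> simp [rep, List.replicate_succ]

lemma applyG_append (g : Bool → Word) (u v : Word) :
    applyG g (u ++ v) = applyG g u ++ applyG g v := List.flatMap_append

lemma applyG_rep {g : Bool → Word} {s : ℕ} (ha : g false = rep s) (t : ℕ) :
    applyG g (rep t) = rep (s * t) := by
  induction t with
  | zero => simp [rep, applyG]
  | succ t ih =>
    rw [rep_add, applyG_append, ih, show applyG g (rep 1) = rep s by simp [applyG, rep, ha],
      ← rep_add, Nat.mul_succ]

def gaps (g : ℕ → ℕ) : ℕ → Word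
  | 0 => []
  | m + 1 => gaps g m ++ rep (g (m + 1)) ++ [true]

lemma gaps_add (g : ℕ → ℕ) (m n : ℕ) :
    gaps g (m + n) = gaps g m ++ gaps (fun k => g (m + k)) n := by
  induction n with
  | zero => simp [gaps]
  | succ n ih => simp [← Nat.add_assoc, gaps, ih]

lemma gaps_congr {g g' : ℕ → ℕ} {m : ℕ} (h : ∀ k, 0 < k → k ≤ m → g k = g' k) :
    gaps g m = gaps g' m := by
  induction m with
  | zero => rfl
  | succ m ih =>
    simp only [gaps, h (m + 1) m.succ_pos le_rfl, ih fun k hk hkm => h k hk (by omega)]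

lemma length_gaps_succ (g : ℕ → ℕ) (m : ℕ) :
    (gaps g (m + 1)).length = (gaps g m).length + g (m + 1) + 1 := by
  simp [gaps, rep, Nat.add_assoc]

lemma blockWord_eq_cons_gaps (p : ℕ) (α : ℕ → ℕ) : blockWord p α = true :: gaps α (p - 1) := by
  unfold blockWord
  induction p - 1 with
  | zero => rfl
  | succ n ih =>
    rw [List.range_succ, List.flatMap_append, List.flatMap_singleton, List.append_assoc,
      List.cons_append, ← List.singleton_append, ← List.append_assoc, ih]
    simp [gaps]

def PrefixOf (u : Word) (w : ℕ → Bool) : Prop := ∀ k (hk : k < u.length), u[k] = w k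

lemma PrefixOf.of_isPrefix {u v : Word} {w : ℕ → Bool} (huv : u <+: v) (hv : PrefixOf v w) :
    PrefixOf u w :=
  fun k hk => (huv.getElem hk).trans (hv k _)

def IsGapWord (g : ℕ → ℕ) (w : ℕ → Bool) : Prop := ∀ m, PrefixOf (true :: gaps g m) w

section IsGapWord

variable {w : ℕ → Bool} {g : ℕ → ℕ}

lemma apply_length_gaps (hw : IsGapWord g w) (j : ℕ) : w (gaps g j).length = true := by
  cases j with
  | zero => simpa [gaps] using (hw 0 0 (by simp)).symm
  | succ j =>
    have hl : true :: gaps g (j + 1) = (true :: gaps g j ++ rep (g (j + 1))) ++ [true] := by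
      simp [gaps]
    rw [← hw (j + 1) _ (by simp), List.getElem_of_eq hl]
    exact List.getElem_concat_length (by simp [gaps, rep, Nat.add_assoc]) _

lemma apply_length_gaps_add_one_add (hw : IsGapWord g w) {j r : ℕ} (hr : r < g (j + 1)) :
    w ((gaps g j).length + 1 + r) = false := by
  have hr' := hw (j + 1) ((gaps g j).length + 1 + r) (by simp [gaps, rep]; omega)
  simp only [gaps, ← List.cons_append] at hr'
  rw [← hr', List.getElem_append_left (by simp [rep]; omega),
    List.getElem_append_right (by simp)]
  simp [rep]

lemma count_length_gaps (hw : IsGapWord g w) (j : ℕ) :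
    Nat.count (fun n => w n = true) (gaps g j).length = j := by
  induction j with
  | zero => simp [gaps]
  | succ j ih =>
    rw [length_gaps_succ, Nat.add_right_comm, Nat.count_add, Nat.count_succ, ih,
      if_pos (apply_length_gaps hw j),
      Nat.count_of_forall_not fun r hr => by simp [apply_length_gaps_add_one_add hw hr]]

lemma nth_eq_length_gaps (hw : IsGapWord g w) (j : ℕ) :
    Nat.nth (fun n => w n = true) j = (gaps g j).length := by
  simpa [count_length_gaps hw] using
    Nat.nth_count (p := fun n => w n = true) (apply_length_gaps hw j)

lemma Aw_eq_of_isGapWord (hw : IsGapWord g w) {j : ℕ} (hj : 0 < j) : Aw w j = g j := by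
  obtain ⟨j, rfl⟩ := Nat.exists_eq_add_of_lt hj
  simp only [Aw, nth_eq_length_gaps hw, Nat.add_sub_cancel, length_gaps_succ]
  omega

end IsGapWord

def gapImage (s p γ₁ γ₂ : ℕ) (α : ℕ → ℕ) (g : ℕ → ℕ) (j : ℕ) : ℕ :=
  if j % p = 0 then s * g (j / p) + γ₁ + γ₂ else α (j % p)

-- The guard `0 < j ∧ 1 < p` is only there for termination; the value at `0` is never used.
def gapSeq (s p γ₁ γ₂ : ℕ) (α : ℕ → ℕ) (j : ℕ) : ℕ :=
  if 0 < j ∧ 1 < p ∧ j % p = 0 then s * gapSeq s p γ₁ γ₂ α (j / p) + γ₁ + γ₂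
  else α (j % p)
decreasing_by exact Nat.div_lt_self (by omega) (by omega)

section Morphism

variable {h : Bool → Word} {s p γ₁ γ₂ : ℕ} {α : ℕ → ℕ}

lemma gaps_gapImage_shift (hp : 0 < p) (g : ℕ → ℕ) {n : ℕ} (hn : n % p = 0) :
    gaps (fun k => gapImage s p γ₁ γ₂ α g (n + k)) (p - 1) = gaps α (p - 1) :=
  gaps_congr fun k hk hkp => by
    have hmod : (n + k) % p = k := by rw [Nat.add_mod, hn, Nat.zero_add, Nat.mod_mod,
      Nat.mod_eq_of_lt (by omega)]
    simp [gapImage, hmod, hk.ne']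

lemma applyG_cons_gaps (hp : 0 < p) (ha : h false = rep s)
    (hb : h true = rep γ₁ ++ blockWord p α ++ rep γ₂) (g : ℕ → ℕ) (m : ℕ) :
    applyG h (true :: gaps g m)
      = rep γ₁ ++ (true :: gaps (gapImage s p γ₁ γ₂ α g) (p * m + (p - 1))) ++ rep γ₂ := by
  have hbit : applyG h [true] = h true := by simp [applyG]
  induction m with
  | zero =>
    rw [Nat.mul_zero, Nat.zero_add, gaps, hbit, hb, blockWord_eq_cons_gaps,
      ← gaps_gapImage_shift (s := s) (γ₁ := γ₁) (γ₂ := γ₂) hp g (Nat.zero_mod p)]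
    simp only [Nat.zero_add]
  | succ m ih =>
    have hlen : p * (m + 1) + (p - 1) = (p * m + (p - 1) + 1) + (p - 1) := by
      rw [Nat.mul_succ]; omega
    have hpm : p * m + (p - 1) + 1 = p * (m + 1) := by rw [Nat.mul_succ]; omega
    have himage : gapImage s p γ₁ γ₂ α g (p * m + (p - 1) + 1) = s * g (m + 1) + γ₁ + γ₂ := by
      simp [gapImage, hpm, Nat.mul_div_cancel_left _ hp]
    rw [hlen, gaps_add _ (p * m + (p - 1) + 1),
      gaps_gapImage_shift hp g (by rw [hpm, Nat.mul_mod_right]),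
      gaps.eq_2 _ (p * m + (p - 1)), himage, gaps.eq_2 g m,
      ← List.cons_append, applyG_append, ← List.cons_append, applyG_append, ih, applyG_rep ha,
      hbit, hb, blockWord_eq_cons_gaps,
      show s * g (m + 1) + γ₁ + γ₂ = γ₂ + s * g (m + 1) + γ₁ by omega, rep_add, rep_add]
    simp only [List.append_assoc, List.cons_append, List.nil_append]

lemma gapImage_gapSeq (hp : 1 < p) {j : ℕ} (hj : 0 < j) :
    gapImage s p γ₁ γ₂ α (gapSeq s p γ₁ γ₂ α) j = gapSeq s p γ₁ γ₂ α j := by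
  rw [gapSeq, gapImage]
  by_cases hjp : j % p = 0 <;> simp [hjp, hj, hp]

lemma gapSeq_mul (hp : 1 < p) {i : ℕ} (hi : 0 < i) :
    gapSeq s p γ₁ γ₂ α (p * i) = s * gapSeq s p γ₁ γ₂ α i + γ₁ + γ₂ := by
  rw [← gapImage_gapSeq hp (Nat.mul_pos (by omega) hi), gapImage,
    if_pos (Nat.mul_mod_right p i), Nat.mul_div_cancel_left i (by omega)]

lemma iterate_applyG_true (hp : 1 < p) (ha : h false = rep s)
    (hb : h true = rep γ₁ ++ blockWord p α ++ rep γ₂) (n : ℕ) :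
    ∃ c t, (applyG h)^[n] [true]
      = rep c ++ (true :: gaps (gapSeq s p γ₁ γ₂ α) (p ^ n - 1)) ++ rep t := by
  induction n with
  | zero => exact ⟨0, 0, rfl⟩
  | succ n ih =>
    obtain ⟨c, t, hct⟩ := ih
    have hpow : p * (p ^ n - 1) + (p - 1) = p ^ (n + 1) - 1 := by
      have : p ≤ p * p ^ n := Nat.le_mul_of_pos_right p (Nat.pow_pos (by omega))
      rw [Nat.mul_sub_one, pow_succ, Nat.mul_comm (p ^ n)]
      omega
    refine ⟨s * c + γ₁, γ₂ + s * t, ?_⟩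
    rw [Function.iterate_succ_apply', hct, applyG_append, applyG_append, applyG_rep ha,
      applyG_rep ha, applyG_cons_gaps (by omega) ha hb, hpow,
      gaps_congr fun k hk _ => gapImage_gapSeq hp hk, rep_add, rep_add]
    simp only [List.append_assoc]

lemma isGapWord_gapSeq (hp : 1 < p) (ha : h false = rep s)
    (hb : h true = rep γ₁ ++ blockWord p α ++ rep γ₂) {w : ℕ → Bool} (hw : IsOmega h w) :
    IsGapWord (gapSeq s p γ₁ γ₂ α) w := fun m => by
  obtain ⟨c, t, hct⟩ := iterate_applyG_true hp ha hb m
  have hdrop : PrefixOf (true :: gaps (gapSeq s p γ₁ γ₂ α) (p ^ m - 1) ++ rep t) w := by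
    rw [List.cons_append, ← dropWhile_rep_append_cons_true c, ← List.cons_append,
      ← List.append_assoc, ← hct]
    exact hw m
  refine hdrop.of_isPrefix (List.IsPrefix.trans ?_ (List.prefix_append _ _))
  obtain ⟨d, hd⟩ := Nat.exists_eq_add_of_le (Nat.le_sub_one_of_lt (Nat.lt_pow_self hp))
  rw [hd, gaps_add, ← List.cons_append]
  exact List.prefix_append _ _

end Morphism

end GapWord

open GapWord in
theorem stmt7_general (s : ℕ) (p : ℕ) (hp : 2 ≤ p) (γ₁ γ₂ : ℕ) (α : ℕ → ℕ)
    (h : Bool → Word)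
    (ha : h false = rep s)
    (hb : h true = rep γ₁ ++ blockWord p α ++ rep γ₂)
    (w : ℕ → Bool) (hw : IsOmega h w) :
    ∀ i : ℕ, 1 ≤ i → Aw w (p * i) = s * Aw w i + γ₁ + γ₂ := by
  intro i hi
  have hpre := isGapWord_gapSeq hp ha hb hw
  rw [Aw_eq_of_isGapWord hpre (Nat.mul_pos (by omega) hi), Aw_eq_of_isGapWord hpre hi,
    gapSeq_mul hp hi]

/-- for `w = ω(h)`, `A_w(p·i) = s·A_w(i) + γ₁ + γ₂` for all `i ≥ 1`. -/
theorem stmt7 (s : ℕ) (hs : 1 ≤ s) (p : ℕ) (hp : 2 ≤ p) (γ₁ γ₂ : ℕ) (α : ℕ → ℕ)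
    (h : Bool → Word)
    (ha : h false = rep s)
    (hb : h true = rep γ₁ ++ blockWord p α ++ rep γ₂)
    (w : ℕ → Bool) (hw : IsOmega h w) :
    ∀ i : ℕ, 1 ≤ i → Aw w (p * i) = s * Aw w i + γ₁ + γ₂ :=
  stmt7_general s p hp γ₁ γ₂ α h ha hb w hw
end

section
/- Let X = {a,b}, and let h : X* → X* be the morphism with h(a) = a^s and h(b) = a^{γ_1} b a^{α_1} b ⋯ b a^{α_{p-1}} b a^{γ_2}, where s ≥ 1, p ≥ 2 and all exponents are nonnegative. Let w = ω(h). If m ≥ 1, k ≥ 0, d_m,…,d_{m+k} ∈ {0,1,…,p-1} and d_m ≠ 0, then A_w(d_m p^m + d_{m+1} p^{m+1} + ⋯ + d_{m+k} p^{m+k}) = α_{d_m} s^m + (γ_1+γ_2)(1 + s + ⋯ + s^{m-1}). -/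
/-!
Let `gap n = α (n % p)` when `p ∤ n` and `gap (p * n) = γ₁ + γ₂ + s * gap n`. The words
`V i = b a^{gap 1} b ⋯ a^{gap i} b` (`prefixWord`) satisfy
`h (V i) = a^{γ₁} V (p (i + 1) - 1) a^{γ₂}`: the `a`-run before each new block `h(b)` is the
image `a^{s · gap i}` of an old run, framed by the `a^{γ₂}` closing the previous block and the
`a^{γ₁}` opening the next one. Hence `h^n(b) = a^e V (p^n - 1) a^f`, so `ω(h)` is the limit of
the `V i` and `A_w(n) = gap n`. Unfolding the recursion `m` times at `n = p^m t`, `p ∤ t`, gives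
the formula.
-/

theorem List.flatMap_cons_append_singleton {β γ : Type*} (l : List β) (x : γ)
    (f : β → List γ) :
    (l.flatMap fun i => x :: f i) ++ [x] = x :: l.flatMap fun i => f i ++ [x] := by
  induction l with
  | nil => rfl
  | cons a l ih => simp [ih]

theorem Nat.nth_mem_range_of_strictMono {f : ℕ → ℕ} (hf : StrictMono f) (n : ℕ) :
    Nat.nth (· ∈ Set.range f) n = f n := by
  have hinf : (Set.range f).Infinite := Set.infinite_range_of_injective hf.injective
  have := Nat.nth_comp_of_strictMono (p := (· ∈ Set.range f)) (n := n) hf (fun _ => id)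
    (fun hfin => absurd hfin hinf)
  simpa using this.symm

theorem Nat.sum_range_mul_pow_mod (p k : ℕ) (d : ℕ → ℕ) :
    (∑ j ∈ Finset.range (k + 1), d j * p ^ j) % p = d 0 % p := by
  rw [Finset.sum_range_succ', Nat.add_mod, Finset.sum_nat_mod]
  simp [pow_succ, ← mul_assoc]

namespace OmegaWord

theorem rep_append_rep (a b : ℕ) : rep a ++ rep b = rep (a + b) :=
  (List.replicate_add a b false).symm

theorem blockWord_eq_cons (p : ℕ) (α : ℕ → ℕ) :
    blockWord p α = true :: (List.range (p - 1)).flatMap fun j => rep (α (j + 1)) ++ [true] :=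
  List.flatMap_cons_append_singleton _ _ _

section Gaps

variable (s p c : ℕ) (α : ℕ → ℕ)

/-- For `n ≥ 1`, `gap n` is `A_w(n)`, with `c` standing for `γ₁ + γ₂`. -/
def gap (n : ℕ) : ℕ :=
  if 2 ≤ p ∧ n ≠ 0 ∧ n % p = 0 then c + s * gap (n / p) else α (n % p)
termination_by n
decreasing_by exact Nat.div_lt_self (by omega) (by omega)

/-- `prefixWord i` is the prefix of `ω(h)` ending with its `i`-th `b` (counting from `0`), which
sits at position `bPos i`. -/
def prefixWord (i : ℕ) : Word :=
  true :: (List.range i).flatMap fun j => rep (gap s p c α (j + 1)) ++ [true]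

def bPos : ℕ → ℕ
  | 0 => 0
  | i + 1 => bPos i + gap s p c α (i + 1) + 1

variable {s p c α}

theorem gap_of_mod_ne_zero {n : ℕ} (hn : n % p ≠ 0) : gap s p c α n = α (n % p) := by
  rw [gap, if_neg (by tauto)]

theorem gap_mul_add {n j : ℕ} (hj : 0 < j) (hjp : j < p) : gap s p c α (p * n + j) = α j := by
  rw [gap_of_mod_ne_zero] <;> rw [Nat.mul_add_mod, Nat.mod_eq_of_lt hjp]; omega

theorem gap_mul (hp : 2 ≤ p) {n : ℕ} (hn : n ≠ 0) :
    gap s p c α (p * n) = c + s * gap s p c α n := by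
  rw [gap, if_pos ⟨hp, by positivity, Nat.mul_mod_right p n⟩,
    Nat.mul_div_cancel_left n (by omega)]

theorem gap_pow_mul (hp : 2 ≤ p) (m : ℕ) {t : ℕ} (ht : t % p ≠ 0) :
    gap s p c α (p ^ m * t) = α (t % p) * s ^ m + c * ∑ j ∈ Finset.range m, s ^ j := by
  induction m with
  | zero => simp [gap_of_mod_ne_zero ht]
  | succ m ih =>
    have ht0 : t ≠ 0 := by rintro rfl; simp at ht
    rw [pow_succ', mul_assoc, gap_mul hp (by positivity), ih, geom_sum_succ]
    ring

theorem bPos_strictMono : StrictMono (bPos s p c α) :=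
  strictMono_nat_of_lt_succ fun i => by simp only [bPos]; omega

theorem le_bPos (i : ℕ) : i ≤ bPos s p c α i :=
  bPos_strictMono.le_apply

theorem prefixWord_add (i t : ℕ) :
    prefixWord s p c α (i + t) = prefixWord s p c α i ++
      (List.range t).flatMap fun j => rep (gap s p c α (i + j + 1)) ++ [true] := by
  simp [prefixWord, List.range_add, List.flatMap_map, Nat.add_assoc]

theorem prefixWord_succ (i : ℕ) :
    prefixWord s p c α (i + 1) =
      prefixWord s p c α i ++ rep (gap s p c α (i + 1)) ++ [true] := by
  simp [prefixWord_add]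

theorem length_prefixWord (i : ℕ) : (prefixWord s p c α i).length = bPos s p c α i + 1 := by
  induction i with
  | zero => rfl
  | succ i ih => simp [prefixWord_succ, bPos, ih, rep]; omega

theorem getElem_prefixWord_eq_true_iff (j n : ℕ) (hn : n < (prefixWord s p c α j).length) :
    (prefixWord s p c α j)[n] = true ↔ n ∈ Set.range (bPos s p c α) := by
  induction j with
  | zero =>
    obtain rfl : n = 0 := by simpa [prefixWord] using hn
    exact iff_of_true rfl ⟨0, rfl⟩
  | succ j ih =>
    have hlen : (prefixWord s p c α j).length = bPos s p c α j + 1 := length_prefixWord j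
    have hmono : StrictMono (bPos s p c α) := bPos_strictMono
    have hB : bPos s p c α (j + 1) = bPos s p c α j + gap s p c α (j + 1) + 1 := rfl
    simp only [prefixWord_succ, List.getElem_append, List.length_append, hlen, rep,
      List.length_replicate, List.getElem_replicate]
    split_ifs with h_old h_run
    · exact ih _
    · refine iff_of_false not_false ?_
      rintro ⟨i, rfl⟩
      have := hmono.lt_iff_lt.1 (show bPos s p c α j < bPos s p c α i by omega)
      have := hmono.lt_iff_lt.1 (show bPos s p c α i < bPos s p c α (j + 1) by omega)
      omega
    · refine iff_of_true (List.getElem_singleton _) ⟨j + 1, ?_⟩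
      rw [length_prefixWord] at hn
      omega

theorem prefixWord_mul_add_pred (hp : 2 ≤ p) (n : ℕ) :
    prefixWord s p c α (p * n + (p - 1)) =
      prefixWord s p c α (p * n) ++ (blockWord p α).tail := by
  rw [prefixWord_add, blockWord_eq_cons, List.tail_cons]
  congr 1
  refine List.flatMap_congr fun j hj => ?_
  rw [List.mem_range] at hj
  rw [Nat.add_assoc, gap_mul_add (by omega) (by omega)]

theorem prefixWord_pred_eq_blockWord (hp : 2 ≤ p) :
    prefixWord s p c α (p - 1) = blockWord p α := by
  have := prefixWord_mul_add_pred (s := s) (c := c) (α := α) hp 0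
  rw [Nat.mul_zero, Nat.zero_add] at this
  rw [this, blockWord_eq_cons]
  rfl

end Gaps

section Morphism

variable {s p γ₁ γ₂ : ℕ} {α : ℕ → ℕ} {h : Bool → Word}

theorem applyG_append (x y : Word) : applyG h (x ++ y) = applyG h x ++ applyG h y :=
  List.flatMap_append

theorem applyG_rep (ha : h false = rep s) (n : ℕ) : applyG h (rep n) = rep (s * n) := by
  simp [applyG, rep, List.flatMap_replicate, ha, List.flatten_replicate_replicate, Nat.mul_comm]

theorem applyG_prefixWord (hp : 2 ≤ p) (ha : h false = rep s)
    (hb : h true = rep γ₁ ++ blockWord p α ++ rep γ₂) (i : ℕ) :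
    applyG h (prefixWord s p (γ₁ + γ₂) α i) =
      rep γ₁ ++ prefixWord s p (γ₁ + γ₂) α (p * (i + 1) - 1) ++ rep γ₂ := by
  have hb' : applyG h [true] = rep γ₁ ++ blockWord p α ++ rep γ₂ := by simp [applyG, hb]
  induction i with
  | zero => rw [Nat.zero_add, Nat.mul_one, prefixWord_pred_eq_blockWord hp, ← hb']; rfl
  | succ i ih =>
    obtain ⟨T, hT⟩ : ∃ T, blockWord p α = true :: T := ⟨_, blockWord_eq_cons p α⟩
    have hnext : prefixWord s p (γ₁ + γ₂) α (p * (i + 1 + 1) - 1) =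
        prefixWord s p (γ₁ + γ₂) α (p * (i + 1) - 1) ++
          rep (γ₂ + s * gap s p (γ₁ + γ₂) α (i + 1) + γ₁) ++ true :: T := by
      have hpos : 0 < p * (i + 1) := by positivity
      have hprev : p * (i + 1) = p * (i + 1) - 1 + 1 := by omega
      rw [show p * (i + 1 + 1) - 1 = p * (i + 1) + (p - 1) by rw [Nat.mul_succ]; omega,
        prefixWord_mul_add_pred hp, hprev, prefixWord_succ, ← hprev, gap_mul hp i.succ_ne_zero,
        hT, List.tail_cons, add_comm γ₁, add_right_comm]
      simp only [List.append_assoc, List.singleton_append]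
    rw [prefixWord_succ, applyG_append, applyG_append, ih, applyG_rep ha, hb', hT, hnext,
      ← rep_append_rep, ← rep_append_rep]
    simp only [List.append_assoc, List.cons_append]

theorem exists_iterate_applyG_eq (hp : 2 ≤ p) (ha : h false = rep s)
    (hb : h true = rep γ₁ ++ blockWord p α ++ rep γ₂) (n : ℕ) :
    ∃ e f, (applyG h)^[n] [true] =
      rep e ++ prefixWord s p (γ₁ + γ₂) α (p ^ n - 1) ++ rep f := by
  induction n with
  | zero => exact ⟨0, 0, rfl⟩
  | succ n ih =>
    obtain ⟨e, f, hef⟩ := ih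
    have hpow : p * (p ^ n - 1 + 1) - 1 = p ^ (n + 1) - 1 := by
      rw [Nat.sub_add_cancel (Nat.one_le_pow _ _ (by omega)), pow_succ']
    refine ⟨s * e + γ₁, γ₂ + s * f, ?_⟩
    rw [Function.iterate_succ_apply', hef, applyG_append, applyG_append, applyG_rep ha,
      applyG_rep ha, applyG_prefixWord hp ha hb, hpow, ← rep_append_rep, ← rep_append_rep]
    simp only [List.append_assoc]

theorem prefixWord_isPrefix_dropWhile_iterate (hp : 2 ≤ p) (ha : h false = rep s)
    (hb : h true = rep γ₁ ++ blockWord p α ++ rep γ₂) (n : ℕ) :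
    prefixWord s p (γ₁ + γ₂) α (p ^ n - 1) <+:
      ((applyG h)^[n] [true]).dropWhile (fun x => !x) := by
  obtain ⟨e, f, hef⟩ := exists_iterate_applyG_eq hp ha hb n
  rw [hef, List.append_assoc, prefixWord, List.cons_append]
  simp [rep]

theorem _root_.IsOmega.getElem_eq_of_isPrefix {w : ℕ → Bool} (hw : IsOmega h w) {n : ℕ}
    {l : Word} (hl : l <+: ((applyG h)^[n] [true]).dropWhile (fun x => !x)) {k : ℕ}
    (hk : k < l.length) : l[k] = w k := by
  rw [hl.getElem hk]
  exact hw n k _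

theorem _root_.IsOmega.eq_true_iff (hp : 2 ≤ p) (ha : h false = rep s)
    (hb : h true = rep γ₁ ++ blockWord p α ++ rep γ₂) {w : ℕ → Bool} (hw : IsOmega h w)
    (k : ℕ) :
    w k = true ↔ k ∈ Set.range (bPos s p (γ₁ + γ₂) α) := by
  have hk : k < (prefixWord s p (γ₁ + γ₂) α (p ^ (k + 1) - 1)).length := by
    have := Nat.lt_pow_self (n := k + 1) (show 1 < p by omega)
    have : p ^ (k + 1) - 1 ≤ bPos s p (γ₁ + γ₂) α (p ^ (k + 1) - 1) := le_bPos _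
    rw [length_prefixWord]
    omega
  rw [← hw.getElem_eq_of_isPrefix (prefixWord_isPrefix_dropWhile_iterate hp ha hb (k + 1)) hk,
    getElem_prefixWord_eq_true_iff]

end Morphism

theorem Aw_eq_gap {s p c : ℕ} {α : ℕ → ℕ} {w : ℕ → Bool}
    (hw : ∀ k, w k = true ↔ k ∈ Set.range (bPos s p c α)) {n : ℕ} (hn : n ≠ 0) :
    Aw w n = gap s p c α n := by
  obtain ⟨i, rfl⟩ := Nat.exists_eq_add_one_of_ne_zero hn
  have hpred : (fun k => w k = true) = (· ∈ Set.range (bPos s p c α)) :=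
    funext fun k => propext (hw k)
  rw [Aw, hpred, Nat.nth_mem_range_of_strictMono bPos_strictMono,
    Nat.nth_mem_range_of_strictMono bPos_strictMono, Nat.add_sub_cancel, bPos]
  omega

end OmegaWord

theorem stmt8_general (s : ℕ) (p : ℕ) (hp : 2 ≤ p) (γ₁ γ₂ : ℕ) (α : ℕ → ℕ)
    (h : Bool → Word)
    (ha : h false = rep s)
    (hb : h true = rep γ₁ ++ blockWord p α ++ rep γ₂)
    (w : ℕ → Bool) (hw : IsOmega h w)
    (m k : ℕ) (d : ℕ → ℕ)
    (hd : ∀ j, j ≤ k → d (m + j) < p) (hd0 : d m ≠ 0) :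
    Aw w (∑ j ∈ Finset.range (k + 1), d (m + j) * p ^ (m + j)) =
      α (d m) * s ^ m + (γ₁ + γ₂) * ∑ j ∈ Finset.range m, s ^ j := by
  set t := ∑ j ∈ Finset.range (k + 1), d (m + j) * p ^ j
  have hN : ∑ j ∈ Finset.range (k + 1), d (m + j) * p ^ (m + j) = p ^ m * t := by
    simp only [t, Finset.mul_sum, pow_add]
    exact Finset.sum_congr rfl fun j _ => by ring
  have ht : t % p = d m := by
    rw [Nat.sum_range_mul_pow_mod, Nat.add_zero, Nat.mod_eq_of_lt (by simpa using hd 0 k.zero_le)]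
  have ht0 : t % p ≠ 0 := ht ▸ hd0
  have hN0 : p ^ m * t ≠ 0 := mul_ne_zero (by positivity) fun h0 => ht0 (by simp [h0])
  rw [hN, OmegaWord.Aw_eq_gap (hw.eq_true_iff hp ha hb) hN0, OmegaWord.gap_pow_mul hp m ht0, ht]

/-- for `w = ω(h)`, `A_w(∑ d_{m+j} p^{m+j}) = α_{d_m} s^m + (γ₁+γ₂)(1+s+⋯+s^{m-1})`
whenever `m ≥ 1`, the digits `d_{m+j}` lie in `{0,…,p-1}` and `d_m ≠ 0`. -/
theorem stmt8 (s : ℕ) (hs : 1 ≤ s) (p : ℕ) (hp : 2 ≤ p) (γ₁ γ₂ : ℕ) (α : ℕ → ℕ)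
    (h : Bool → Word)
    (ha : h false = rep s)
    (hb : h true = rep γ₁ ++ blockWord p α ++ rep γ₂)
    (w : ℕ → Bool) (hw : IsOmega h w)
    (m k : ℕ) (hm : 1 ≤ m) (d : ℕ → ℕ)
    (hd : ∀ j, j ≤ k → d (m + j) < p) (hd0 : d m ≠ 0) :
    Aw w (∑ j ∈ Finset.range (k + 1), d (m + j) * p ^ (m + j)) =
      α (d m) * s ^ m + (γ₁ + γ₂) * ∑ j ∈ Finset.range m, s ^ j :=
  stmt8_general s p hp γ₁ γ₂ α h ha hb w hw m k d hd hd0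
end

section
/- Let g_1, g_2 be morphisms of X* where X = {a,b}, with g_1(a) a power of a, g_2(a) a power of a, g_1(b) ∈ a* (i.e. g_1(b) is a power of a). Then g_1 g_2 = g_2 g_1 if and only if |g_1(a)|·|g_2(b)|_a + |g_1(b)|·|g_2(b)|_b = |g_2(a)|·|g_1(b)|. -/
lemma applyG_of_aStar {g : Bool → Word} {k m : ℕ}
    (hf : g false = rep k) (ht : g true = rep m) (w : Word) :
    applyG g w = rep (k * w.count false + m * w.count true) := by
  induction w with
  | nil => simp [applyG, rep]
  | cons x w ih =>
    have : applyG g (x :: w) = g x ++ applyG g w := rfl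
    rw [this, ih]
    cases x <;> simp [hf, ht, rep, ← List.replicate_add, List.count_cons, mul_add]
    <;> ring_nf

/-- for upper triangular `g₁`, `g₂` with `g₁(b) ∈ a*`, `g₁g₂ = g₂g₁` iff
`|g₁(a)|·|g₂(b)|_a + |g₁(b)|·|g₂(b)|_b = |g₂(a)|·|g₁(b)|`. -/
theorem stmt16 (g₁ g₂ : Bool → Word)
    (h₁a : ∃ k : ℕ, g₁ false = rep k)
    (h₂a : ∃ k : ℕ, g₂ false = rep k)
    (h₁b : ∃ k : ℕ, g₁ true = rep k) :
    applyG g₁ ∘ applyG g₂ = applyG g₂ ∘ applyG g₁ ↔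
      (g₁ false).length * (g₂ true).count false +
        (g₁ true).length * (g₂ true).count true =
      (g₂ false).length * (g₁ true).length := by
  obtain ⟨k₁, hk₁⟩ := h₁a
  obtain ⟨k₂, hk₂⟩ := h₂a
  obtain ⟨m₁, hm₁⟩ := h₁b
  have len₁a : (g₁ false).length = k₁ := by simp [hk₁, rep]
  have len₂a : (g₂ false).length = k₂ := by simp [hk₂, rep]
  have len₁b : (g₁ true).length = m₁ := by simp [hm₁, rep]
  have countf : ∀ n : ℕ, (rep n).count false = n := by simp [rep]
  have countt : ∀ n : ℕ, (rep n).count true = 0 := by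
    simp [rep, List.count_replicate]
  have applyG_rep : ∀ n : ℕ, applyG g₂ (rep n) = rep (n * k₂) := by
    intro n
    induction n with
    | zero => simp [applyG, rep]
    | succ n ih =>
      have : rep (n + 1) = false :: rep n := by simp [rep, List.replicate_succ]
      rw [this]
      show g₂ false ++ applyG g₂ (rep n) = _
      rw [ih, hk₂, rep, rep, rep, ← List.replicate_add]
      ring_nf
  -- g₁ applied to g₂ true
  have key₁ : applyG g₁ (g₂ true) =
      rep (k₁ * (g₂ true).count false + m₁ * (g₂ true).count true) :=
    applyG_of_aStar hk₁ hm₁ _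
  have key₂ : applyG g₂ (g₁ true) = rep (m₁ * k₂) := by
    rw [hm₁, applyG_rep]
  rw [len₁a, len₂a, len₁b]
  constructor
  · intro h
    have h' := congrFun h [true]
    have e1 : applyG g₂ [true] = g₂ true := by simp [applyG]
    have e2 : applyG g₁ [true] = g₁ true := by simp [applyG]
    simp only [Function.comp_apply, e1, e2] at h'
    have := congrArg (List.count false) h'
    rw [key₁, key₂, countf, countf] at this
    rw [mul_comm k₂ m₁]
    exact this
  · intro h
    have letter : ∀ x, applyG g₁ (g₂ x) = applyG g₂ (g₁ x) := by
      intro x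
      cases x
      · rw [hk₂, hk₁, applyG_rep, applyG_of_aStar hk₁ hm₁, countf, countt]
        ring_nf
      · rw [key₁, key₂]
        congr 1
        rw [h, mul_comm]
    funext w
    simp only [Function.comp_apply]
    induction w with
    | nil => rfl
    | cons x w ih =>
      have hx : ∀ (g g' : Bool → Word), applyG g (applyG g' (x :: w)) =
          applyG g (g' x) ++ applyG g (applyG g' w) := by
        intro g g'
        show applyG g (g' x ++ applyG g' w) = _
        simp [applyG, List.flatMap_append]
      rw [hx, hx, ih, letter]
end
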